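/- arXiv:2003.01597 — 2 statements merged into one kernel-verified Lean document; each statement's English description precedes it below -/
import Mathlib

section
/- Let Ω be a compact metric space with distance ρ and let F : [0,∞) → [0,∞) be continuous. If μ₁, μ₂ ∈ 𝒫(Ω) are both local minimizers of I_F in the weak-* topology and I_F(μ₁) ≠ I_F(μ₂), then supp μ₁ is not contained in supp μ₂. -/
open MeasureTheory Topology Filter
open scoped ENNReal NNReal

/-- The support of a (nonnegative) Borel measure: points all of whose open
neighborhoods have positive measure. -/
def msupp {Ω : Type*} [TopologicalSpace Ω] {m : MeasurableSpace Ω}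
    (μ : Measure Ω) : Set Ω :=
  {x | ∀ U : Set Ω, IsOpen U → x ∈ U → μ U ≠ 0}

/-- The interaction energy `I_F(μ) = ∬ F(ρ(x,y)) dμ(x) dμ(y)` of a measure
with respect to a kernel `F` and a distance function `ρ`. -/
noncomputable def energy {Ω : Type*} {m : MeasurableSpace Ω}
    (F : ℝ → ℝ) (ρ : Ω → Ω → ℝ) (μ : Measure Ω) : ℝ :=
  ∫ x, ∫ y, F (ρ x y) ∂μ ∂μ

/-- The integral of a function against a finite signed measure, via the
Jordan decomposition. -/
noncomputable def sintegral {Ω : Type*} {m : MeasurableSpace Ω}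
    (ν : SignedMeasure Ω) (f : Ω → ℝ) : ℝ :=
  ∫ x, f x ∂ν.toJordanDecomposition.posPart
    - ∫ x, f x ∂ν.toJordanDecomposition.negPart

/-- The interaction energy `∬ F(ρ(x,y)) dν(x) dν(y)` of a finite signed
measure `ν`. -/
noncomputable def signedEnergy {Ω : Type*} {m : MeasurableSpace Ω}
    (F : ℝ → ℝ) (ρ : Ω → Ω → ℝ) (ν : SignedMeasure Ω) : ℝ :=
  sintegral ν (fun x => sintegral ν (fun y => F (ρ x y)))

/-- The Wasserstein `d_∞` distance: infimum over couplings `π` of `μ` and `ν`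
of the supremum of `ρ(x,y)` over the support of `π`. -/
noncomputable def dInfty {Ω : Type*} [TopologicalSpace Ω] {m : MeasurableSpace Ω}
    (ρ : Ω → Ω → ℝ) (μ ν : Measure Ω) : ℝ≥0∞ :=
  ⨅ (π : Measure (Ω × Ω)) (_ : π.map Prod.fst = μ ∧ π.map Prod.snd = ν),
    ⨆ (p : Ω × Ω) (_ : p ∈ msupp π), ENNReal.ofReal (ρ p.1 p.2)

/-! A local minimiser `μ` of the quadratic energy `Q(μ) = ∬ G dμ dμ` (with `B` the associated
symmetric bilinear form) cannot decrease to first order along `μ + t (γ - α)`, `t ↓ 0`: so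
`B(μ, α) ≤ B(μ, γ)`, and in case of equality the second-order coefficient `Q(α - γ)` is
nonnegative. Taking for `α` the measure `μ` conditioned on a small neighbourhood of a support
point shows that the potential of `μ` is at most `Q(μ)` on `supp μ`.

If `supp μ₁ ⊆ supp μ₂`, integrating this bound for `μ₂` against `μ₁` gives
`B(μ₁, μ₂) ≤ Q(μ₂)`. The segment from `μ₂` towards `μ₁` forces `B(μ₁, μ₂) = Q(μ₂)`, and then its
second-order term gives `Q(μ₂) ≤ Q(μ₁)`; the segment from `μ₁` towards `μ₂` gives
`Q(μ₁) ≤ B(μ₁, μ₂) = Q(μ₂)`. -/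

open ProbabilityTheory

theorem Continuous.integrable_of_compactSpace {Ω E : Type*} [TopologicalSpace Ω] [CompactSpace Ω]
    [MeasurableSpace Ω] [OpensMeasurableSpace Ω] [NormedAddCommGroup E] {f : Ω → E}
    (hf : Continuous f) (μ : Measure Ω) [IsFiniteMeasure μ] : Integrable f μ :=
  hf.integrable_of_hasCompactSupport (.of_compactSpace f)

noncomputable def potential {Ω : Type*} [MeasurableSpace Ω] (G : Ω → Ω → ℝ) (ν : Measure Ω)
    (x : Ω) : ℝ :=
  ∫ y, G x y ∂ν

noncomputable def mutualEnergy {Ω : Type*} [MeasurableSpace Ω] (G : Ω → Ω → ℝ)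
    (μ ν : Measure Ω) : ℝ :=
  ∫ x, potential G ν x ∂μ

theorem mutualEnergy_smul_left {Ω : Type*} [MeasurableSpace Ω] {G : Ω → Ω → ℝ} (c : ℝ≥0)
    (μ ν : Measure Ω) : mutualEnergy G (c • μ) ν = c * mutualEnergy G μ ν :=
  integral_smul_nnreal_measure _ c

theorem mutualEnergy_smul_right {Ω : Type*} [MeasurableSpace Ω] {G : Ω → Ω → ℝ} (c : ℝ≥0)
    (μ ν : Measure Ω) : mutualEnergy G μ (c • ν) = c * mutualEnergy G μ ν := by
  simp only [mutualEnergy, potential, integral_smul_nnreal_measure, NNReal.smul_def, smul_eq_mul,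
    integral_const_mul]

theorem exists_add_smul_eq_of_smul_le {Ω : Type*} [MeasurableSpace Ω] {μ : ProbabilityMeasure Ω}
    {α γ : Measure Ω} [IsProbabilityMeasure α] [IsProbabilityMeasure γ] {c : ℝ≥0}
    (hle : c • α ≤ μ + c • γ) :
    ∃ ν : ProbabilityMeasure Ω, (ν : Measure Ω) + c • α = μ + c • γ := by
  have hsum : (μ + c • γ) - c • α + c • α = μ + c • γ := Measure.sub_add_cancel_of_le hle
  refine ⟨⟨(μ + c • γ) - c • α, ⟨?_⟩⟩, hsum⟩
  have huniv := congrArg (fun ν : Measure Ω => ν Set.univ) hsum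
  simp only [Measure.add_apply, Measure.coe_nnreal_smul_apply, measure_univ, mul_one] at huniv
  exact (ENNReal.add_left_inj ENNReal.coe_ne_top).1 huniv

theorem tendsto_of_eventually_add_smul_eq {Ω : Type*} [TopologicalSpace Ω] [MeasurableSpace Ω]
    [OpensMeasurableSpace Ω] {p : ℝ → ProbabilityMeasure Ω} {μ : ProbabilityMeasure Ω}
    {α γ : Measure Ω} [IsFiniteMeasure α] [IsFiniteMeasure γ]
    (h : ∀ᶠ t in 𝓝[>] (0 : ℝ), (p t : Measure Ω) + t.toNNReal • α = μ + t.toNNReal • γ) :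
    Tendsto p (𝓝[>] 0) (𝓝 μ) := by
  rw [ProbabilityMeasure.tendsto_iff_forall_integral_tendsto]
  intro f
  have hline : ∀ᶠ t in 𝓝[>] (0 : ℝ), ∫ x, f x ∂(p t : Measure Ω)
      = ∫ x, f x ∂(μ : Measure Ω) + t * (∫ x, f x ∂γ - ∫ x, f x ∂α) := by
    filter_upwards [h, self_mem_nhdsWithin] with t ht (htpos : 0 < t)
    have hint := congrArg (fun κ => ∫ x, f x ∂κ) ht
    simp only [integral_add_measure (f.integrable _) (f.integrable _),
      integral_smul_nnreal_measure, NNReal.smul_def, Real.coe_toNNReal _ htpos.le,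
      smul_eq_mul] at hint
    linarith
  have hlim : Tendsto (fun t : ℝ => ∫ x, f x ∂(μ : Measure Ω) + t * (∫ x, f x ∂γ - ∫ x, f x ∂α))
      (𝓝[>] 0) (𝓝 (∫ x, f x ∂(μ : Measure Ω))) :=
    (Continuous.tendsto' (by fun_prop) 0 _ (by simp)).mono_left nhdsWithin_le_nhds
  exact hlim.congr' (hline.mono fun _ h => h.symm)

theorem quadratic_coeffs_nonneg {b c : ℝ} (h : ∀ᶠ t in 𝓝[>] (0 : ℝ), 0 ≤ b * t + c * t ^ 2) :
    0 ≤ b ∧ (b = 0 → 0 ≤ c) := by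
  have hlin : ∀ᶠ t in 𝓝[>] (0 : ℝ), 0 ≤ b + c * t := by
    filter_upwards [h, self_mem_nhdsWithin] with t ht (htpos : 0 < t)
    nlinarith
  refine ⟨?_, fun hb => ?_⟩
  · have hlim : Tendsto (fun t : ℝ => b + c * t) (𝓝[>] 0) (𝓝 b) :=
      (Continuous.tendsto' (by fun_prop) 0 b (by simp)).mono_left nhdsWithin_le_nhds
    exact ge_of_tendsto hlim hlin
  · obtain ⟨t, ht, htpos⟩ := (hlin.and self_mem_nhdsWithin).exists
    subst hb
    exact nonneg_of_mul_nonneg_left (by simpa using ht) htpos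

theorem msupp_eq_support {Ω : Type*} [TopologicalSpace Ω] [MeasurableSpace Ω] (μ : Measure Ω) :
    msupp μ = μ.support := by
  ext x
  simp only [msupp, Measure.support_eq_forall_isOpen, Set.mem_ofPred_eq, pos_iff_ne_zero]
  exact forall_congr' fun U => ⟨fun h hx hU => h hU hx, fun h hU hx => h hx hU⟩

theorem ae_mem_msupp {Ω : Type*} [TopologicalSpace Ω] [HereditarilyLindelofSpace Ω]
    [MeasurableSpace Ω] (μ : Measure Ω) : ∀ᵐ x ∂μ, x ∈ msupp μ :=
  msupp_eq_support μ ▸ Measure.support_mem_ae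

section Kernel

variable {Ω : Type*} [TopologicalSpace Ω] [SecondCountableTopology Ω] [CompactSpace Ω]
  [MeasurableSpace Ω] [OpensMeasurableSpace Ω] {G : Ω → Ω → ℝ}

theorem continuous_potential (hG : Continuous (Function.uncurry G)) (ν : Measure Ω)
    [IsFiniteMeasure ν] : Continuous (potential G ν) := by
  obtain ⟨M, hM⟩ := isCompact_univ.exists_bound_of_continuousOn hG.continuousOn
  refine continuous_of_dominated (bound := fun _ => M)
    (fun x => (hG.comp (Continuous.prodMk_right x)).aestronglyMeasurable_of_compactSpace)
    (fun x => ae_of_all _ fun y => hM (x, y) (Set.mem_univ _)) (integrable_const M)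
    (ae_of_all _ fun y => hG.comp (Continuous.prodMk_left y))

theorem mutualEnergy_add_left (hG : Continuous (Function.uncurry G)) (μ ν ρ : Measure Ω)
    [IsFiniteMeasure μ] [IsFiniteMeasure ν] [IsFiniteMeasure ρ] :
    mutualEnergy G (μ + ν) ρ = mutualEnergy G μ ρ + mutualEnergy G ν ρ :=
  integral_add_measure ((continuous_potential hG ρ).integrable_of_compactSpace μ)
    ((continuous_potential hG ρ).integrable_of_compactSpace ν)

theorem mutualEnergy_add_right (hG : Continuous (Function.uncurry G)) (μ ν ρ : Measure Ω)
    [IsFiniteMeasure μ] [IsFiniteMeasure ν] [IsFiniteMeasure ρ] :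
    mutualEnergy G ρ (μ + ν) = mutualEnergy G ρ μ + mutualEnergy G ρ ν := by
  have hsplit : potential G (μ + ν) = potential G μ + potential G ν := funext fun x =>
    integral_add_measure ((hG.comp (Continuous.prodMk_right x)).integrable_of_compactSpace μ)
      ((hG.comp (Continuous.prodMk_right x)).integrable_of_compactSpace ν)
  rw [mutualEnergy, hsplit]
  exact integral_add ((continuous_potential hG μ).integrable_of_compactSpace ρ)
    ((continuous_potential hG ν).integrable_of_compactSpace ρ)

theorem mutualEnergy_comm (hG : Continuous (Function.uncurry G)) (hsym : ∀ x y, G x y = G y x)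
    (μ ν : Measure Ω) [IsFiniteMeasure μ] [IsFiniteMeasure ν] :
    mutualEnergy G μ ν = mutualEnergy G ν μ := by
  simp only [mutualEnergy, potential]
  rw [integral_integral_swap (hG.integrable_of_compactSpace (μ.prod ν))]
  exact integral_congr_ae (ae_of_all _ fun y => integral_congr_ae (ae_of_all _ fun x => hsym x y))

theorem mutualEnergy_self_eq_of_add_smul_eq (hG : Continuous (Function.uncurry G))
    (hsym : ∀ x y, G x y = G y x) {ν α β γ : Measure Ω} [IsFiniteMeasure ν] [IsFiniteMeasure α]
    [IsFiniteMeasure β] [IsFiniteMeasure γ] {c : ℝ≥0} (h : ν + c • α = β + c • γ) :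
    mutualEnergy G ν ν = mutualEnergy G β β
      + 2 * c * (mutualEnergy G β γ - mutualEnergy G β α)
      + c ^ 2 * (mutualEnergy G α α - 2 * mutualEnergy G α γ + mutualEnergy G γ γ) := by
  have hself := congrArg (fun κ => mutualEnergy G κ κ) h
  have hcross := congrArg (fun κ => mutualEnergy G κ α) h
  simp only [mutualEnergy_add_left hG, mutualEnergy_add_right hG, mutualEnergy_smul_left,
    mutualEnergy_smul_right] at hself hcross
  linear_combination hself - 2 * c * hcross - c * mutualEnergy_comm hG hsym α ν
    + c * mutualEnergy_comm hG hsym γ β - 2 * c ^ 2 * mutualEnergy_comm hG hsym γ α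

theorem IsLocalMin.mutualEnergy_variation (hG : Continuous (Function.uncurry G))
    (hsym : ∀ x y, G x y = G y x) {μ : ProbabilityMeasure Ω}
    (hmin : IsLocalMin (fun ν : ProbabilityMeasure Ω => mutualEnergy G ν ν) μ)
    {α γ : Measure Ω} [IsProbabilityMeasure α] [IsProbabilityMeasure γ]
    (hle : ∀ᶠ t in 𝓝[>] (0 : ℝ), t.toNNReal • α ≤ μ + t.toNNReal • γ) :
    mutualEnergy G μ α ≤ mutualEnergy G μ γ ∧
      (mutualEnergy G μ α = mutualEnergy G μ γ →
        2 * mutualEnergy G α γ ≤ mutualEnergy G α α + mutualEnergy G γ γ) := by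
  have hpath : ∀ t : ℝ, ∃ ν : ProbabilityMeasure Ω, t.toNNReal • α ≤ μ + t.toNNReal • γ →
      (ν : Measure Ω) + t.toNNReal • α = μ + t.toNNReal • γ := fun t => by
    by_cases ht : t.toNNReal • α ≤ μ + t.toNNReal • γ
    · obtain ⟨ν, hν⟩ := exists_add_smul_eq_of_smul_le ht
      exact ⟨ν, fun _ => hν⟩
    · exact ⟨μ, fun h => absurd h ht⟩
  choose p hp using hpath
  have hline := hle.mono hp
  have hquad : ∀ᶠ t in 𝓝[>] (0 : ℝ), 0 ≤ 2 * (mutualEnergy G μ γ - mutualEnergy G μ α) * t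
      + (mutualEnergy G α α - 2 * mutualEnergy G α γ + mutualEnergy G γ γ) * t ^ 2 := by
    filter_upwards [(tendsto_of_eventually_add_smul_eq hline).eventually hmin, hline,
      self_mem_nhdsWithin] with t hmin_t ht (htpos : 0 < t)
    have hexp := mutualEnergy_self_eq_of_add_smul_eq hG hsym ht
    rw [Real.coe_toNNReal _ htpos.le] at hexp
    linarith
  obtain ⟨hfirst, hsecond⟩ := quadratic_coeffs_nonneg hquad
  exact ⟨by linarith, fun heq => by linarith [hsecond (by linarith)]⟩

theorem IsLocalMin.mutualEnergy_segment (hG : Continuous (Function.uncurry G))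
    (hsym : ∀ x y, G x y = G y x) {μ : ProbabilityMeasure Ω}
    (hmin : IsLocalMin (fun ν : ProbabilityMeasure Ω => mutualEnergy G ν ν) μ)
    (ν : ProbabilityMeasure Ω) :
    mutualEnergy G μ μ ≤ mutualEnergy G μ ν ∧
      (mutualEnergy G μ μ = mutualEnergy G μ ν →
        2 * mutualEnergy G μ ν ≤ mutualEnergy G μ μ + mutualEnergy G ν ν) := by
  refine hmin.mutualEnergy_variation hG hsym ?_
  filter_upwards [Ioo_mem_nhdsGT one_pos] with t ht
  refine Measure.le_add_right fun s => ?_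
  rw [Measure.coe_nnreal_smul_apply]
  exact mul_le_of_le_one_left' (by simpa using ht.2.le)

theorem IsLocalMin.potential_le_mutualEnergy_self (hG : Continuous (Function.uncurry G))
    (hsym : ∀ x y, G x y = G y x) {μ : ProbabilityMeasure Ω}
    (hmin : IsLocalMin (fun ν : ProbabilityMeasure Ω => mutualEnergy G ν ν) μ) {x₀ : Ω}
    (hx₀ : x₀ ∈ msupp (μ : Measure Ω)) : potential G μ x₀ ≤ mutualEnergy G μ μ := by
  refine le_of_forall_pos_le_add fun ε hε => ?_
  set S := potential G μ ⁻¹' Set.Ioi (potential G μ x₀ - ε)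
  have hS : IsOpen S := isOpen_Ioi.preimage (continuous_potential hG μ)
  have hμS : (μ : Measure Ω) S ≠ 0 := hx₀ S hS (by simp [S, hε])
  have := cond_isProbabilityMeasure (μ := (μ : Measure Ω)) hμS
  have havg : potential G μ x₀ - ε ≤ mutualEnergy G (μ : Measure Ω)[|S] μ := by
    calc potential G μ x₀ - ε = ∫ _, (potential G μ x₀ - ε) ∂(μ : Measure Ω)[|S] := by simp
      _ ≤ mutualEnergy G (μ : Measure Ω)[|S] μ :=
        integral_mono_ae (integrable_const _)
          ((continuous_potential hG μ).integrable_of_compactSpace _)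
          (ae_cond_of_forall_mem hS.measurableSet fun x hx => le_of_lt hx)
  have hle : ∀ᶠ t in 𝓝[>] (0 : ℝ),
      t.toNNReal • (μ : Measure Ω)[|S] ≤ μ + t.toNNReal • (μ : Measure Ω) := by
    have hsmall : ∀ᶠ t in 𝓝[>] (0 : ℝ), ENNReal.ofReal t ≤ (μ : Measure Ω) S :=
      nhdsWithin_le_nhds <| (ENNReal.continuous_ofReal.tendsto' 0 0 ENNReal.ofReal_zero).eventually
        (ge_mem_nhds (pos_iff_ne_zero.2 hμS))
    filter_upwards [hsmall] with t ht
    refine Measure.le_add_right fun A => ?_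
    calc (t.toNNReal • (μ : Measure Ω)[|S]) A
        = ENNReal.ofReal t / (μ : Measure Ω) S * (μ : Measure Ω).restrict S A := by
          rw [Measure.coe_nnreal_smul_apply, ProbabilityTheory.cond, Measure.smul_apply,
            smul_eq_mul, ← mul_assoc, div_eq_mul_inv]
          rfl
      _ ≤ 1 * (μ : Measure Ω).restrict S A := by
          gcongr
          exact ENNReal.div_le_of_le_mul (by simpa using ht)
      _ ≤ (μ : Measure Ω) A := by rw [one_mul]; exact Measure.restrict_apply_le _ _
  have hvar := (hmin.mutualEnergy_variation hG hsym hle).1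
  rw [mutualEnergy_comm hG hsym] at hvar
  linarith

theorem IsLocalMin.mutualEnergy_le_of_msupp_subset (hG : Continuous (Function.uncurry G))
    (hsym : ∀ x y, G x y = G y x) {μ : ProbabilityMeasure Ω}
    (hmin : IsLocalMin (fun ν : ProbabilityMeasure Ω => mutualEnergy G ν ν) μ)
    {ν : Measure Ω} [IsProbabilityMeasure ν] (hsub : msupp ν ⊆ msupp (μ : Measure Ω)) :
    mutualEnergy G ν μ ≤ mutualEnergy G μ μ :=
  calc mutualEnergy G ν μ ≤ ∫ _, mutualEnergy G μ μ ∂ν :=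
        integral_mono_ae ((continuous_potential hG μ).integrable_of_compactSpace ν)
          (integrable_const _) ((ae_mem_msupp ν).mono fun _ hx =>
            hmin.potential_le_mutualEnergy_self hG hsym (hsub hx))
    _ = mutualEnergy G μ μ := by simp

end Kernel

theorem stmt_5_general {Ω : Type*} [MetricSpace Ω] [CompactSpace Ω]
    [MeasurableSpace Ω] [BorelSpace Ω]
    (F : ℝ → ℝ) (hF_cont : ContinuousOn F (Set.Ici 0))
    (μ₁ μ₂ : ProbabilityMeasure Ω)
    (hmin₁ : ∃ U ∈ 𝓝 μ₁, ∀ μ ∈ U,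
      energy F dist (μ₁ : Measure Ω) ≤ energy F dist (μ : Measure Ω))
    (hmin₂ : ∃ U ∈ 𝓝 μ₂, ∀ μ ∈ U,
      energy F dist (μ₂ : Measure Ω) ≤ energy F dist (μ : Measure Ω))
    (hne : energy F dist (μ₁ : Measure Ω) ≠ energy F dist (μ₂ : Measure Ω)) :
    ¬ msupp (μ₁ : Measure Ω) ⊆ msupp (μ₂ : Measure Ω) := by
  intro hsub
  set G : Ω → Ω → ℝ := fun x y => F (dist x y)
  have hG : Continuous (Function.uncurry G) :=
    hF_cont.comp_continuous continuous_dist fun p => dist_nonneg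
  have hsym : ∀ x y, G x y = G y x := fun x y => by simp only [G, dist_comm]
  have h₁ : IsLocalMin (fun ν : ProbabilityMeasure Ω => mutualEnergy G ν ν) μ₁ :=
    eventually_iff_exists_mem.2 hmin₁
  have h₂ : IsLocalMin (fun ν : ProbabilityMeasure Ω => mutualEnergy G ν ν) μ₂ :=
    eventually_iff_exists_mem.2 hmin₂
  have hcross := h₂.mutualEnergy_le_of_msupp_subset hG hsym hsub
  obtain ⟨h₁₂, -⟩ := h₁.mutualEnergy_segment hG hsym μ₂
  obtain ⟨h₂₁, h₂₁'⟩ := h₂.mutualEnergy_segment hG hsym μ₁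
  have hcomm := mutualEnergy_comm hG hsym (μ₁ : Measure Ω) μ₂
  have hsecond := h₂₁' (by linarith)
  exact hne (by change mutualEnergy G μ₁ μ₁ = mutualEnergy G μ₂ μ₂; linarith)

/-- supports of local minimizers with distinct energies.
If `μ₁, μ₂` are local minimizers of `I_F` in the weak-* topology and
`I_F(μ₁) ≠ I_F(μ₂)`, then `supp μ₁ ⊄ supp μ₂`. -/
theorem stmt_5 {Ω : Type*} [MetricSpace Ω] [CompactSpace Ω]
    [MeasurableSpace Ω] [BorelSpace Ω]
    (F : ℝ → ℝ) (hF_cont : ContinuousOn F (Set.Ici 0))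
    (hF_nonneg : ∀ t ∈ Set.Ici (0 : ℝ), 0 ≤ F t)
    (μ₁ μ₂ : ProbabilityMeasure Ω)
    (hmin₁ : ∃ U ∈ 𝓝 μ₁, ∀ μ ∈ U,
      energy F dist (μ₁ : Measure Ω) ≤ energy F dist (μ : Measure Ω))
    (hmin₂ : ∃ U ∈ 𝓝 μ₂, ∀ μ ∈ U,
      energy F dist (μ₂ : Measure Ω) ≤ energy F dist (μ : Measure Ω))
    (hne : energy F dist (μ₁ : Measure Ω) ≠ energy F dist (μ₂ : Measure Ω)) :
    ¬ msupp (μ₁ : Measure Ω) ⊆ msupp (μ₂ : Measure Ω) :=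
  stmt_5_general F hF_cont μ₁ μ₂ hmin₁ hmin₂ hne
end

section
/- Let 𝕊^d be the unit sphere in ℝ^{d+1} with geodesic distance ρ(x,y) = arccos⟨x,y⟩. Then for every Borel probability measure μ on 𝕊^d one has ∬_{𝕊^d} ρ(x,y) dμ(x) dμ(y) ≤ π/2, and every centrally symmetric probability measure μ (i.e., μ invariant under the antipodal map x ↦ −x) attains equality; i.e., every centrally symmetric measure maximizes the geodesic distance energy ∬ ρ dμ dμ over 𝒫(𝕊^d). -/
/-!
Since `arccos t = π/2 - arcsin t`, it suffices to show `∬ arcsin ⟪x, y⟫ dμ dμ ≥ 0`, with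
equality for centrally symmetric `μ`. The Maclaurin series `arcsin t = ∑ aₙ t^(2n+1)` has
nonnegative coefficients and converges on all of `[-1, 1]` (the endpoints matter: `⟪x, x⟫ = 1`),
and each power `⟪x, y⟫ ^ k` is a positive definite kernel: expanding in coordinates,
`∬ ⟪x, y⟫ ^ k dμ dμ` is a sum of squares of moments of `μ`. Hence the double integral of
`arcsin ⟪x, y⟫` is a nonnegative combination of nonnegative numbers. For symmetric `μ` it
vanishes because `arcsin` is odd.
-/

open MeasureTheory Topology Filter Real
open scoped ENNReal RealInnerProductSpace

lemma Ring.multichoose_pos {R : Type*} [CommRing R] [LinearOrder R] [IsStrictOrderedRing R]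
    [BinomialRing R] {r : R} (hr : 0 < r) (n : ℕ) : 0 < Ring.multichoose r n := by
  have h := Ring.factorial_nsmul_multichoose_eq_ascPochhammer r n
  rw [Polynomial.ascPochhammer_smeval_eq_eval, nsmul_eq_mul] at h
  exact pos_of_mul_pos_right (h ▸ ascPochhammer_pos n r hr) (by positivity)

lemma multichoose_one_half_nonneg (n : ℕ) : 0 ≤ Ring.multichoose (1 / 2 : ℝ) n :=
  (Ring.multichoose_pos one_half_pos n).le

lemma hasSum_one_div_sqrt_one_sub {x : ℝ} (hx : |x| < 1) :
    HasSum (fun n => Ring.multichoose (1 / 2 : ℝ) n * x ^ n) (1 / √(1 - x)) := by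
  have h := (one_div_one_sub_rpow_hasFPowerSeriesOnBall_zero (1 / 2)).hasSum
    (y := x) (by simpa [enorm_eq_nnnorm, ← NNReal.coe_lt_coe] using hx)
  simp only [FormalMultilinearSeries.ofScalars_apply_eq, zero_add, smul_eq_mul] at h
  simpa only [sqrt_eq_rpow, Ring.multichoose_eq] using h

lemma hasSum_one_div_sqrt_one_sub_sq {t : ℝ} (ht : |t| < 1) :
    HasSum (fun n => Ring.multichoose (1 / 2 : ℝ) n * t ^ (2 * n)) (1 / √(1 - t ^ 2)) := by
  simpa only [pow_mul] using hasSum_one_div_sqrt_one_sub (x := t ^ 2) (by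
    rw [abs_pow, sq_lt_one_iff_abs_lt_one]; simpa using ht)

-- `Ring.multichoose (1 / 2) n = (2n choose n) / 4 ^ n` are the coefficients of `(1 - x) ^ (-1/2)`.
noncomputable def arcsinCoeff (n : ℕ) : ℝ := Ring.multichoose (1 / 2 : ℝ) n / (2 * n + 1)

lemma arcsinCoeff_nonneg (n : ℕ) : 0 ≤ arcsinCoeff n :=
  div_nonneg (multichoose_one_half_nonneg n) (by positivity)

lemma hasDerivAt_arcsinCoeff_mul_pow (n : ℕ) (t : ℝ) :
    HasDerivAt (fun z => arcsinCoeff n * z ^ (2 * n + 1))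
      (Ring.multichoose (1 / 2 : ℝ) n * t ^ (2 * n)) t :=
  ((hasDerivAt_pow (2 * n + 1) t).const_mul (arcsinCoeff n)).congr_deriv (by
    rw [arcsinCoeff, Nat.add_sub_cancel]
    push_cast
    field_simp)

lemma hasDerivAt_tsum_arcsinCoeff {t : ℝ} (ht : |t| < 1) :
    HasDerivAt (fun z => ∑' n, arcsinCoeff n * z ^ (2 * n + 1)) (1 / √(1 - t ^ 2)) t := by
  obtain ⟨r, htr, hr1⟩ := exists_between ht
  have hr : |r| < 1 := by rwa [abs_of_nonneg ((abs_nonneg t).trans htr.le)]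
  rw [← (hasSum_one_div_sqrt_one_sub_sq ht).tsum_eq]
  refine hasDerivAt_tsum_of_isPreconnected (hasSum_one_div_sqrt_one_sub_sq hr).summable
    (isOpen_Ioo (a := -r) (b := r)) isPreconnected_Ioo
    (fun n y _ => hasDerivAt_arcsinCoeff_mul_pow n y) ?_
    (y₀ := 0) (by simpa using (abs_nonneg t).trans_lt htr) ?_ (abs_lt.1 htr)
  · intro n y hy
    rw [norm_mul, Real.norm_of_nonneg (multichoose_one_half_nonneg n), norm_pow]
    gcongr
    · exact multichoose_one_half_nonneg n
    · exact abs_le.2 ⟨hy.1.le, hy.2.le⟩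
  · simp

lemma summable_arcsinCoeff_mul_pow {t : ℝ} (ht : |t| < 1) :
    Summable (fun n => arcsinCoeff n * t ^ (2 * n + 1)) := by
  refine (hasSum_one_div_sqrt_one_sub_sq (t := |t|) (by rwa [abs_abs])).summable.of_norm_bounded
    fun n => ?_
  rw [norm_mul, Real.norm_of_nonneg (arcsinCoeff_nonneg n), norm_pow, Real.norm_eq_abs, pow_succ]
  calc arcsinCoeff n * (|t| ^ (2 * n) * |t|)
      _ ≤ Ring.multichoose (1 / 2 : ℝ) n * (|t| ^ (2 * n) * 1) := by
        gcongr
        · exact multichoose_one_half_nonneg n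
        · exact div_le_self (multichoose_one_half_nonneg n) (by simp)
      _ = _ := by rw [mul_one]

lemma hasSum_arcsin_of_abs_lt {t : ℝ} (ht : |t| < 1) :
    HasSum (fun n => arcsinCoeff n * t ^ (2 * n + 1)) (arcsin t) := by
  set F := fun z : ℝ => ∑' n, arcsinCoeff n * z ^ (2 * n + 1)
  have hF : ∀ z ∈ Set.Ioo (-1 : ℝ) 1, HasDerivAt F (1 / √(1 - z ^ 2)) z :=
    fun z hz => hasDerivAt_tsum_arcsinCoeff (abs_lt.2 hz)
  have harcsin : ∀ z ∈ Set.Ioo (-1 : ℝ) 1, HasDerivAt arcsin (1 / √(1 - z ^ 2)) z :=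
    fun z hz => hasDerivAt_arcsin hz.1.ne' hz.2.ne
  have hFt : F t = arcsin t := isOpen_Ioo.eqOn_of_deriv_eq isPreconnected_Ioo
    (fun z hz => (hF z hz).differentiableAt.differentiableWithinAt)
    (fun z hz => (harcsin z hz).differentiableAt.differentiableWithinAt)
    (fun z hz => by rw [(hF z hz).deriv, (harcsin z hz).deriv])
    (x := 0) (by norm_num) (by simp [F]) (abs_lt.1 ht)
  exact hFt ▸ (summable_arcsinCoeff_mul_pow ht).hasSum

lemma sum_range_arcsinCoeff_le (N : ℕ) : ∑ n ∈ Finset.range N, arcsinCoeff n ≤ π / 2 := by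
  have hpoly : Continuous fun t : ℝ => ∑ n ∈ Finset.range N, arcsinCoeff n * t ^ (2 * n + 1) :=
    by fun_prop
  have hle : ∀ t ∈ Set.Ioo (0 : ℝ) 1,
      ∑ n ∈ Finset.range N, arcsinCoeff n * t ^ (2 * n + 1) ≤ π / 2 := fun t ht =>
    (sum_le_hasSum _ (fun n _ => by have := arcsinCoeff_nonneg n; have := ht.1; positivity)
      (hasSum_arcsin_of_abs_lt (abs_lt.2 ⟨by linarith [ht.1], ht.2⟩))).trans
      (arcsin_le_pi_div_two t)
  simpa using le_of_tendsto (hpoly.tendsto 1 |>.mono_left nhdsWithin_le_nhds)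
    (eventually_of_mem (Ioo_mem_nhdsLT one_pos) hle)

lemma hasSum_arcsinCoeff : HasSum arcsinCoeff (π / 2) := by
  have hsum : Summable arcsinCoeff :=
    summable_of_sum_range_le arcsinCoeff_nonneg sum_range_arcsinCoeff_le
  have hge : ∀ t ∈ Set.Ioo (0 : ℝ) 1, arcsin t ≤ ∑' n, arcsinCoeff n := fun t ht => by
    rw [← (hasSum_arcsin_of_abs_lt (abs_lt.2 ⟨by linarith [ht.1], ht.2⟩)).tsum_eq]
    refine (summable_arcsinCoeff_mul_pow (abs_lt.2 ⟨by linarith [ht.1], ht.2⟩)).tsum_le_tsum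
      (fun n => mul_le_of_le_one_right (arcsinCoeff_nonneg n) (pow_le_one₀ ht.1.le ht.2.le)) hsum
  convert hsum.hasSum
  refine le_antisymm ?_ (tsum_le_of_sum_range_le arcsinCoeff_nonneg sum_range_arcsinCoeff_le)
  simpa using le_of_tendsto (continuous_arcsin.tendsto 1 |>.mono_left nhdsWithin_le_nhds)
    (eventually_of_mem (Ioo_mem_nhdsLT one_pos) hge)

lemma hasSum_arcsin {t : ℝ} (ht : t ∈ Set.Icc (-1 : ℝ) 1) :
    HasSum (fun n => arcsinCoeff n * t ^ (2 * n + 1)) (arcsin t) := by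
  rcases eq_or_lt_of_le ht.1 with rfl | h₁
  · simpa [Odd.neg_one_pow ⟨_, rfl⟩] using hasSum_arcsinCoeff.neg
  rcases eq_or_lt_of_le ht.2 with rfl | h₂
  · simpa using hasSum_arcsinCoeff
  exact hasSum_arcsin_of_abs_lt (abs_lt.2 ⟨h₁, h₂⟩)

section CompactSpace

variable {X : Type*} [MetricSpace X] [CompactSpace X] [MeasurableSpace X] [BorelSpace X]
  (μ : Measure X) [IsFiniteMeasure μ]

lemma Continuous.integrable_of_compactSpace_s15 {f : X → ℝ} (hf : Continuous f) : Integrable f μ :=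
  hf.integrable_of_hasCompactSupport (.of_compactSpace f)

lemma continuous_parametric_integral_of_compactSpace {F : X → X → ℝ}
    (hF : Continuous fun p : X × X => F p.1 p.2) : Continuous fun x => ∫ y, F x y ∂μ := by
  simpa using continuous_parametric_integral_of_continuous (μ := μ) hF isCompact_univ

lemma integral_integral_const_sub [IsProbabilityMeasure μ] (c : ℝ) {F : X → X → ℝ}
    (hF : Continuous fun p : X × X => F p.1 p.2) :
    ∫ x, ∫ y, (c - F x y) ∂μ ∂μ = c - ∫ x, ∫ y, F x y ∂μ ∂μ := by
  have hFy : ∀ x, Continuous (F x) := fun x => hF.comp (Continuous.prodMk_right x)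
  simp_rw [integral_sub (integrable_const c) ((hFy _).integrable_of_compactSpace_s15 μ),
    integral_const, probReal_univ, one_smul]
  rw [integral_sub (integrable_const c)
    ((continuous_parametric_integral_of_compactSpace μ hF).integrable_of_compactSpace_s15 μ),
    integral_const, probReal_univ, one_smul]

end CompactSpace

section Sphere

variable {ι : Type*} [Fintype ι]

local notation "E" => EuclideanSpace ℝ ι
local notation "𝕊" => Metric.sphere (0 : EuclideanSpace ℝ ι) 1

lemma inner_mem_Icc_of_mem_sphere (x y : 𝕊) :
    ⟪(x : E), (y : E)⟫ ∈ Set.Icc (-1 : ℝ) 1 := by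
  have := abs_real_inner_le_norm (x : E) (y : E)
  simp only [norm_eq_of_mem_sphere, mul_one] at this
  exact abs_le.mp this

lemma continuous_inner_sphere : Continuous fun p : 𝕊 × 𝕊 => ⟪(p.1 : E), (p.2 : E)⟫ := by
  fun_prop

lemma integral_integral_inner_pow_nonneg (μ : Measure 𝕊) [IsFiniteMeasure μ] (k : ℕ) :
    0 ≤ ∫ x, ∫ y, ⟪(x : E), (y : E)⟫ ^ k ∂μ ∂μ := by
  set m : (Fin k → ι) → 𝕊 → ℝ := fun p y => ∏ j, (y : E) (p j)
  have hm : ∀ p, Continuous (m p) := fun p => by fun_prop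
  have expand : ∀ x y : 𝕊, ⟪(x : E), (y : E)⟫ ^ k = ∑ p, m p x * m p y := fun x y => by
    simp only [PiLp.inner_apply, RCLike.inner_apply, conj_trivial, Fintype.sum_pow, m,
      ← Finset.prod_mul_distrib, mul_comm]
  calc (0 : ℝ) ≤ ∑ p, (∫ x, m p x ∂μ) * ∫ y, m p y ∂μ :=
        Finset.sum_nonneg fun p _ => mul_self_nonneg _
    _ = ∫ x, ∫ y, ⟪(x : E), (y : E)⟫ ^ k ∂μ ∂μ := by
      simp_rw [expand, integral_finsetSum _ fun p _ =>
        ((hm p).integrable_of_compactSpace_s15 μ).const_mul _, integral_const_mul]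
      rw [integral_finsetSum _ fun p _ => ((hm p).integrable_of_compactSpace_s15 μ).mul_const _]
      simp_rw [integral_mul_const]

lemma integral_integral_nonneg_of_hasSum (μ : Measure 𝕊) [IsFiniteMeasure μ] {a : ℕ → ℝ}
    {e : ℕ → ℕ} {φ : ℝ → ℝ} (ha : ∀ n, 0 ≤ a n)
    (hφ : ∀ t ∈ Set.Icc (-1 : ℝ) 1, HasSum (fun n => a n * t ^ e n) (φ t)) :
    0 ≤ ∫ x, ∫ y, φ ⟪(x : E), (y : E)⟫ ∂μ ∂μ := by
  have hsum : Summable a := by simpa using (hφ 1 (by norm_num)).summable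
  set K : ℕ → 𝕊 → 𝕊 → ℝ := fun n x y => a n * ⟪(x : E), (y : E)⟫ ^ e n
  have hK : ∀ n, Continuous fun p : 𝕊 × 𝕊 => K n p.1 p.2 :=
    fun n => continuous_const.mul (continuous_inner_sphere.pow _)
  have hKle : ∀ n x y, ‖K n x y‖ ≤ a n := fun n x y => by
    rw [norm_mul, norm_pow, Real.norm_of_nonneg (ha n)]
    exact mul_le_of_le_one_right (ha n)
      (pow_le_one₀ (norm_nonneg _) (abs_le.2 (inner_mem_Icc_of_mem_sphere x y)))
  have hinner : ∀ x, HasSum (fun n => ∫ y, K n x y ∂μ) (∫ y, φ ⟪(x : E), (y : E)⟫ ∂μ) :=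
    fun x => hasSum_integral_of_dominated_convergence (fun n _ => a n)
      (fun n => ((hK n).comp (Continuous.prodMk_right x)).aestronglyMeasurable)
      (fun n => ae_of_all _ (hKle n x)) (ae_of_all _ fun _ => hsum) (integrable_const _)
      (ae_of_all _ fun y => hφ _ (inner_mem_Icc_of_mem_sphere x y))
  have houter := hasSum_integral_of_dominated_convergence (μ := μ)
    (fun n _ => a n * μ.real Set.univ)
    (fun n => (continuous_parametric_integral_of_compactSpace μ (hK n)).aestronglyMeasurable)
    (fun n => ae_of_all _ fun x => norm_integral_le_of_norm_le_const (ae_of_all _ (hKle n x)))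
    (ae_of_all _ fun _ => hsum.mul_right _) (integrable_const _) (ae_of_all _ hinner)
  refine houter.nonneg fun n => ?_
  simp_rw [K, integral_const_mul]
  exact mul_nonneg (ha n) (integral_integral_inner_pow_nonneg μ (e n))

lemma integral_integral_eq_zero_of_odd (μ : Measure 𝕊) [IsFiniteMeasure μ]
    (hμ : μ.map (fun x => -x) = μ) {φ : ℝ → ℝ} (hφc : Continuous φ)
    (hφ : ∀ t, φ (-t) = -φ t) :
    ∫ x, ∫ y, φ ⟪(x : E), (y : E)⟫ ∂μ ∂μ = 0 := by
  have hc := continuous_parametric_integral_of_compactSpace μ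
    (F := fun x y : 𝕊 => φ ⟪(x : E), (y : E)⟫) (hφc.comp continuous_inner_sphere)
  have h := integral_map (μ := μ) continuous_neg.aemeasurable (hμ.symm ▸ hc.aestronglyMeasurable)
  simp only [hμ, coe_neg_sphere, inner_neg_left, hφ, integral_neg] at h
  linarith

lemma integral_integral_arccos_inner (μ : Measure 𝕊) [IsProbabilityMeasure μ] :
    ∫ x, ∫ y, arccos ⟪(x : E), (y : E)⟫ ∂μ ∂μ
      = π / 2 - ∫ x, ∫ y, arcsin ⟪(x : E), (y : E)⟫ ∂μ ∂μ := by
  simp_rw [arccos_eq_pi_div_two_sub_arcsin]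
  exact integral_integral_const_sub μ _ (continuous_arcsin.comp continuous_inner_sphere)

end Sphere

/-- maximizers of the geodesic distance energy, `δ = 1`.
For every Borel probability measure `μ` on `𝕊^d`,
`∬ ρ(x,y) dμ dμ ≤ π/2`, and every centrally symmetric probability measure
(invariant under the antipodal map) attains equality. -/
theorem stmt_15 (d : ℕ) :
    ∀ μ : Measure ↥(Metric.sphere (0 : EuclideanSpace ℝ (Fin (d + 1))) 1),
      IsProbabilityMeasure μ →
      (∫ x, ∫ y, Real.arccos ⟪(x : EuclideanSpace ℝ (Fin (d + 1))),
          (y : EuclideanSpace ℝ (Fin (d + 1)))⟫ ∂μ ∂μ ≤ π / 2) ∧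
      (μ.map (fun x => -x) = μ →
        ∫ x, ∫ y, Real.arccos ⟪(x : EuclideanSpace ℝ (Fin (d + 1))),
          (y : EuclideanSpace ℝ (Fin (d + 1)))⟫ ∂μ ∂μ = π / 2) := by
  intro μ _
  have hnonneg := integral_integral_nonneg_of_hasSum μ arcsinCoeff_nonneg fun _ => hasSum_arcsin
  refine ⟨by linarith [integral_integral_arccos_inner μ], fun hsym => ?_⟩
  linarith [integral_integral_arccos_inner μ,
    integral_integral_eq_zero_of_odd μ hsym continuous_arcsin arcsin_neg]
end
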